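/- arXiv:1811.12007 — 4 statements merged into one kernel-verified Lean document; each statement's English description precedes it below -/
import Mathlib

section
/- For every dimension m ≥ 1 and every ε ∈ (1/√m, 1], the covering number N(B_2^m, ε B_∞^m) ≤ (17 ε² m)^{1/ε²}. -/
open Finset




/-- rounding toward zero on the grid `εℤ` -/
noncomputable def rnd (ε a : ℝ) : ℤ := if 0 ≤ a then ⌊a / ε⌋ else ⌈a / ε⌉

lemma rnd_between (ε a : ℝ) (hε : 0 < ε) :
    |a - ε * rnd ε a| ≤ ε ∧ |ε * rnd ε a| ≤ |a| := by
  unfold rnd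
  split_ifs with h
  · have h1 : (⌊a / ε⌋ : ℝ) ≤ a / ε := Int.floor_le _
    have h2 : a / ε < ⌊a / ε⌋ + 1 := Int.lt_floor_add_one _
    have h3 : (0:ℝ) ≤ ⌊a / ε⌋ := by
      exact_mod_cast Int.floor_nonneg.2 (div_nonneg h hε.le)
    have e1 : ε * (⌊a / ε⌋ : ℝ) ≤ a := by
      have := mul_le_mul_of_nonneg_left h1 hε.le
      rwa [mul_div_cancel₀ _ hε.ne'] at this
    have e2 : a < ε * (⌊a / ε⌋ : ℝ) + ε := by
      have := mul_lt_mul_of_pos_left h2 hε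
      rw [mul_add, mul_one, mul_div_cancel₀ _ hε.ne'] at this
      linarith
    constructor
    · rw [abs_le]; constructor <;> nlinarith
    · rw [abs_of_nonneg (by positivity), abs_of_nonneg h]; linarith
  · push_neg at h
    have h1 : a / ε ≤ (⌈a / ε⌉ : ℝ) := Int.le_ceil _
    have h2 : (⌈a / ε⌉ : ℝ) < a / ε + 1 := Int.ceil_lt_add_one _
    have h3 : (⌈a / ε⌉ : ℝ) ≤ 0 := by
      exact_mod_cast Int.ceil_le.2 (by exact_mod_cast div_nonpos_of_nonpos_of_nonneg h.le hε.le)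
    have e1 : a ≤ ε * (⌈a / ε⌉ : ℝ) := by
      have := mul_le_mul_of_nonneg_left h1 hε.le
      rwa [mul_div_cancel₀ _ hε.ne'] at this
    have e2 : ε * (⌈a / ε⌉ : ℝ) < a + ε := by
      have := mul_lt_mul_of_pos_left h2 hε
      rw [mul_add, mul_one, mul_div_cancel₀ _ hε.ne'] at this
      linarith
    have hq : ε * (⌈a / ε⌉ : ℝ) ≤ 0 := mul_nonpos_of_nonneg_of_nonpos hε.le h3
    constructor
    · rw [abs_le]; constructor <;> nlinarith
    · rw [abs_of_nonpos hq, abs_of_nonpos h.le]; linarith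

/-- the integer grid points -/
noncomputable def Fgrid (m T : ℕ) : Finset (Fin m → ℤ) :=
  (Fintype.piFinset fun _ : Fin m => Finset.Icc (-(T:ℤ)) T).filter
    (fun j => ∑ i, (j i)^2 ≤ (T:ℤ))

lemma abs_le_sq (a : ℤ) : |a| ≤ a ^ 2 := by
  rcases eq_or_ne a 0 with h | h
  · simp [h]
  · have h1 : (1:ℤ) ≤ |a| := Int.one_le_abs h
    calc |a| = |a| * 1 := (mul_one _).symm
    _ ≤ |a| * |a| := by exact mul_le_mul_of_nonneg_left h1 (abs_nonneg a)
    _ = a ^ 2 := by rw [abs_mul_abs_self, pow_two]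

lemma Fgrid_natAbs_sum {m T : ℕ} {j : Fin m → ℤ} (hj : j ∈ Fgrid m T) :
    ∑ i, (j i).natAbs ≤ T := by
  have h1 : j ∈ _ ∧ _ := Finset.mem_filter.1 hj
  have h2 : ((∑ i, (j i).natAbs : ℕ) : ℤ) ≤ T := by
    push_cast
    calc ∑ i, |j i| ≤ ∑ i, (j i)^2 := Finset.sum_le_sum fun i _ => abs_le_sq (j i)
    _ ≤ (T:ℤ) := h1.2
  exact_mod_cast h2

noncomputable def msum {m : ℕ} (j : Fin m → ℤ) : Multiset (Option (Fin m × Bool)) :=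
  ∑ i, (j i).natAbs • ({some (i, decide (0 ≤ j i))} : Multiset (Option (Fin m × Bool)))

lemma msum_card {m : ℕ} (j : Fin m → ℤ) :
    Multiset.card (msum j) = ∑ i, (j i).natAbs := by
  unfold msum
  rw [show Multiset.card (∑ i, (j i).natAbs • ({some (i, decide (0 ≤ j i))} :
      Multiset (Option (Fin m × Bool)))) = (⟨⟨Multiset.card, Multiset.card_zero⟩,
      fun a b => Multiset.card_add a b⟩ : Multiset (Option (Fin m × Bool)) →+ ℕ)
      (∑ i, (j i).natAbs • ({some (i, decide (0 ≤ j i))} :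
      Multiset (Option (Fin m × Bool)))) from rfl, map_sum]
  simp

lemma msum_count {m : ℕ} (j : Fin m → ℤ) (i : Fin m) (b : Bool) :
    Multiset.count (some (i, b)) (msum j)
      = if decide (0 ≤ j i) = b then (j i).natAbs else 0 := by
  unfold msum
  rw [Multiset.count_sum']
  rw [Finset.sum_eq_single i]
  · rw [Multiset.count_nsmul, Multiset.count_singleton]
    by_cases h : decide (0 ≤ j i) = b <;> simp [h]
    · intro hb; exact absurd hb.symm h
  · intro k _ hk
    rw [Multiset.count_nsmul, Multiset.count_singleton]
    simp [Ne.symm hk]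
  · intro h; exact absurd (Finset.mem_univ i) h

noncomputable def enc (m T : ℕ) (j : Fin m → ℤ) : Sym (Option (Fin m × Bool)) T :=
  if h : ∑ i, (j i).natAbs ≤ T then
    ⟨msum j + (T - ∑ i, (j i).natAbs) • ({none} : Multiset (Option (Fin m × Bool))), by
      rw [Multiset.card_add, msum_card, Multiset.card_nsmul, Multiset.card_singleton,
        mul_one]
      omega⟩
  else Sym.replicate T none

lemma enc_recover {m T : ℕ} {j : Fin m → ℤ} (h : ∑ i, (j i).natAbs ≤ T) (i : Fin m) :
    j i = (Multiset.count (some (i, true)) ((enc m T j) : Multiset (Option (Fin m × Bool))) : ℤ)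
      - (Multiset.count (some (i, false)) ((enc m T j) : Multiset (Option (Fin m × Bool))) : ℤ) := by
  have hc : ∀ b : Bool,
      Multiset.count (some (i, b)) ((enc m T j) : Multiset (Option (Fin m × Bool)))
        = if decide (0 ≤ j i) = b then (j i).natAbs else 0 := by
    intro b
    rw [show enc m T j = _ from dif_pos h]
    show Multiset.count _ (msum j + _) = _
    rw [Multiset.count_add, msum_count, Multiset.count_nsmul, Multiset.count_singleton]
    simp
  rw [hc true, hc false]
  by_cases h0 : 0 ≤ j i
  · rw [if_pos (by simp [h0]), if_neg (by simp [h0])]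
    omega
  · rw [if_neg (by simp [h0]), if_pos (by simp [h0])]
    omega

lemma Fgrid_card (m T : ℕ) : (Fgrid m T).card ≤ (2 * m + T).choose T := by
  have hinj : Set.InjOn (enc m T) (Fgrid m T) := by
    intro j1 h1 j2 h2 heq
    funext i
    rw [enc_recover (Fgrid_natAbs_sum h1) i, enc_recover (Fgrid_natAbs_sum h2) i, heq]
  have hcard : (Fgrid m T).card ≤ Fintype.card (Sym (Option (Fin m × Bool)) T) := by
    rw [← Finset.card_univ]
    exact Finset.card_le_card_of_injOn (enc m T) (fun a _ => Finset.mem_univ _) hinj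
  calc (Fgrid m T).card ≤ Fintype.card (Sym (Option (Fin m × Bool)) T) := hcard
  _ = Nat.multichoose (Fintype.card (Option (Fin m × Bool))) T := Sym.card_sym_eq_multichoose _ _
  _ = Nat.multichoose (2 * m + 1) T := by
      congr 1
      simp [Fintype.card_option, Fintype.card_prod]
      ring
  _ = (2 * m + 1 + T - 1).choose T := Nat.multichoose_eq _ _
  _ = (2 * m + T).choose T := by congr 1; omega

lemma choose_le_exp_pow (n k : ℕ) (hk : 0 < k) :
    ((n.choose k : ℝ)) ≤ (Real.exp 1 * n / k) ^ k := by
  have hkf : (0:ℝ) < (k.factorial : ℝ) := by exact_mod_cast k.factorial_pos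
  have hkp : (0:ℝ) < (k:ℝ) := by exact_mod_cast hk
  have h1 : ((n.choose k : ℝ)) ≤ (n:ℝ) ^ k / k.factorial := by
    exact_mod_cast Nat.choose_le_pow_div k n
  have h2 : ((k:ℝ)) ^ k / k.factorial ≤ Real.exp k :=
    Real.pow_div_factorial_le_exp (x := (k:ℝ)) (by positivity) k
  have h3 : ((k:ℝ)) ^ k ≤ Real.exp k * k.factorial := by
    rw [div_le_iff₀ hkf] at h2; linarith
  have h4 : (n:ℝ) ^ k / k.factorial ≤ (Real.exp 1 * n / k) ^ k := by
    rw [div_pow, mul_pow, Real.exp_one_pow, div_le_div_iff₀ hkf (by positivity)]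
    calc (n:ℝ) ^ k * (k:ℝ) ^ k ≤ (n:ℝ) ^ k * (Real.exp k * k.factorial) := by
          exact mul_le_mul_of_nonneg_left h3 (by positivity)
    _ = Real.exp k * (n:ℝ) ^ k * k.factorial := by ring
  linarith


/-- Covering number bound: for `ε ∈ (1/√m, 1]`, the Euclidean unit ball of `ℝ^m`
admits an `ε`-net with respect to the cube `B_∞^m` of cardinality at most `(17 ε² m)^{1/ε²}`. -/
theorem covering_ball_by_cube_large_eps (m : ℕ) (hm : 1 ≤ m) (ε : ℝ)
    (hε0 : 1 / Real.sqrt m < ε) (hε : ε ≤ 1) :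
    ∃ 𝒩 : Finset (Fin m → ℝ),
      (∀ y ∈ 𝒩, (∑ i, y i ^ 2) ≤ 1) ∧
      (∀ x : Fin m → ℝ, (∑ i, x i ^ 2) ≤ 1 → ∃ y ∈ 𝒩, ∀ i, |x i - y i| ≤ ε) ∧
      (𝒩.card : ℝ) ≤ (17 * ε ^ 2 * m) ^ ((1 : ℝ) / ε ^ 2) := by
  have hm0 : (0:ℝ) < m := by exact_mod_cast hm
  have hsq : (0:ℝ) < Real.sqrt m := Real.sqrt_pos.2 hm0
  have hε0' : (0:ℝ) < ε := lt_trans (by positivity) hε0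
  have hεm : 1 < ε ^ 2 * m := by
    have h1 : (1 / Real.sqrt m) * (1 / Real.sqrt m) < ε * ε :=
      mul_lt_mul'' hε0 hε0 (by positivity) (by positivity)
    have h2 : Real.sqrt m * Real.sqrt m = m := Real.mul_self_sqrt hm0.le
    have h3 : 1 / (m:ℝ) < ε ^ 2 := by
      rw [pow_two]
      calc 1 / (m:ℝ) = (1 / Real.sqrt m) * (1 / Real.sqrt m) := by
            rw [div_mul_div_comm, one_mul, h2]
      _ < ε * ε := h1
    calc (1:ℝ) = (1 / (m:ℝ)) * m := by field_simp
    _ < ε ^ 2 * m := by exact mul_lt_mul_of_pos_right h3 hm0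
  have hε2 : (0:ℝ) < ε ^ 2 := by positivity
  have ht1 : 1 ≤ 1 / ε ^ 2 := by
    rw [le_div_iff₀ hε2]
    nlinarith
  have htm : 1 / ε ^ 2 < m := by
    rw [div_lt_iff₀ hε2]
    linarith [hεm]
  set T : ℕ := ⌊1 / ε ^ 2⌋₊ with hT
  have hT1 : 1 ≤ T := Nat.le_floor (by exact_mod_cast ht1)
  have hT1r : (1:ℝ) ≤ T := by exact_mod_cast hT1
  have hT0r : (0:ℝ) < T := by linarith
  have hTle : (T:ℝ) ≤ 1 / ε ^ 2 := Nat.floor_le (by positivity)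
  have hTmr : (T:ℝ) < m := lt_of_le_of_lt hTle htm
  have hTm : T ≤ m := by exact_mod_cast hTmr.le
  refine ⟨(Fgrid m T).image (fun j i => ε * (j i : ℝ)), ?_, ?_, ?_⟩
  · -- net is inside the ball
    intro y hy
    obtain ⟨j, hj, rfl⟩ := Finset.mem_image.1 hy
    have hjs : ((∑ i, (j i) ^ 2 : ℤ) : ℝ) ≤ (T:ℝ) := by
      exact_mod_cast (Finset.mem_filter.1 hj).2
    have : ∑ i, (ε * (j i : ℝ)) ^ 2 = ε ^ 2 * ((∑ i, (j i) ^ 2 : ℤ) : ℝ) := by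
      push_cast
      rw [Finset.mul_sum]
      congr 1; funext i; ring
    rw [this]
    calc ε ^ 2 * ((∑ i, (j i) ^ 2 : ℤ) : ℝ) ≤ ε ^ 2 * (1 / ε ^ 2) := by
          exact mul_le_mul_of_nonneg_left (le_trans hjs hTle) hε2.le
    _ = 1 := by field_simp
  · -- net property
    intro x hx
    set j : Fin m → ℤ := fun i => rnd ε (x i) with hjdef
    have hprop : ∀ i, |x i - ε * (j i : ℝ)| ≤ ε ∧ |ε * (j i : ℝ)| ≤ |x i| :=
      fun i => rnd_between ε (x i) hε0'
    have hsq' : ∀ i, ε ^ 2 * ((j i : ℝ)) ^ 2 ≤ (x i) ^ 2 := by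
      intro i
      have h1 := (hprop i).2
      have h2 : |ε * (j i : ℝ)| ^ 2 ≤ |x i| ^ 2 :=
        pow_le_pow_left₀ (abs_nonneg _) h1 2
      rw [sq_abs, sq_abs, mul_pow] at h2
      linarith
    have hsumr : ((∑ i, (j i) ^ 2 : ℤ) : ℝ) ≤ 1 / ε ^ 2 := by
      push_cast
      rw [le_div_iff₀ hε2, Finset.sum_mul]
      calc ∑ i, ((j i : ℝ)) ^ 2 * ε ^ 2 ≤ ∑ i, (x i) ^ 2 := by
            refine Finset.sum_le_sum fun i _ => ?_
            have := hsq' i; linarith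
      _ ≤ 1 := hx
    have hsumZ : ∑ i, (j i) ^ 2 ≤ (T : ℤ) := by
      rw [hT, Int.natCast_floor_eq_floor (by positivity)]
      exact Int.le_floor.2 hsumr
    have hjmem : j ∈ Fgrid m T := by
      rw [Fgrid, Finset.mem_filter]
      refine ⟨Fintype.mem_piFinset.2 fun i => ?_, hsumZ⟩
      rw [Finset.mem_Icc, ← abs_le]
      calc |j i| ≤ (j i) ^ 2 := abs_le_sq _
      _ ≤ ∑ i', (j i') ^ 2 := by
          exact Finset.single_le_sum (fun i' _ => sq_nonneg (j i')) (Finset.mem_univ i)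
      _ ≤ (T : ℤ) := hsumZ
    exact ⟨fun i => ε * (j i : ℝ), Finset.mem_image_of_mem _ hjmem,
      fun i => (hprop i).1⟩
  · -- cardinality
    have hbase1 : (1:ℝ) ≤ 17 * ε ^ 2 * m := by nlinarith
    have hcard1 : (((Fgrid m T).image (fun j i => ε * (j i : ℝ))).card : ℝ)
        ≤ (((2 * m + T).choose T : ℕ) : ℝ) := by
      exact_mod_cast le_trans (Finset.card_image_le) (Fgrid_card m T)
    have hchoose : (((2 * m + T).choose T : ℕ) : ℝ)
        ≤ (Real.exp 1 * (2 * m + T) / T) ^ T := by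
      have := choose_le_exp_pow (2 * m + T) T hT1
      push_cast at this ⊢
      convert this using 3 <;> push_cast <;> ring
    have hTε : (1:ℝ) / 2 ≤ ε ^ 2 * T := by
      have hfl : 1 / ε ^ 2 < (T:ℝ) + 1 := Nat.lt_floor_add_one _
      have h2T : 1 / ε ^ 2 ≤ 2 * (T:ℝ) := by
        rcases le_total (1 / ε ^ 2) 2 with h | h
        · linarith
        · linarith
      calc (1:ℝ) / 2 = (1 / ε ^ 2) * ε ^ 2 / 2 := by field_simp
      _ ≤ (2 * (T:ℝ)) * ε ^ 2 / 2 := by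
          have := mul_le_mul_of_nonneg_right h2T hε2.le
          linarith
      _ = ε ^ 2 * T := by ring
    have hexp : Real.exp 1 < 2.7182818286 := Real.exp_one_lt_d9
    have hbase : Real.exp 1 * (2 * (m:ℝ) + T) / T ≤ 17 * ε ^ 2 * m := by
      rw [div_le_iff₀ hT0r]
      have h3m : 2 * (m:ℝ) + T ≤ 3 * m := by linarith
      calc Real.exp 1 * (2 * (m:ℝ) + T) ≤ Real.exp 1 * (3 * m) := by
            exact mul_le_mul_of_nonneg_left h3m (Real.exp_pos 1).le
      _ ≤ 17 * ε ^ 2 * m * T := by nlinarith [Real.exp_pos 1]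
    have hpow : (Real.exp 1 * (2 * (m:ℝ) + T) / T) ^ T ≤ (17 * ε ^ 2 * m) ^ T := by
      exact pow_le_pow_left₀ (by positivity) hbase T
    have hrpow : ((17 * ε ^ 2 * (m:ℝ)) ^ T : ℝ) ≤ (17 * ε ^ 2 * m) ^ ((1:ℝ) / ε ^ 2) := by
      rw [← Real.rpow_natCast (17 * ε ^ 2 * (m:ℝ)) T]
      exact Real.rpow_le_rpow_of_exponent_le hbase1 hTle
    calc (((Fgrid m T).image (fun j i => ε * (j i : ℝ))).card : ℝ)
        ≤ (((2 * m + T).choose T : ℕ) : ℝ) := hcard1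
    _ ≤ (Real.exp 1 * (2 * m + T) / T) ^ T := hchoose
    _ ≤ (17 * ε ^ 2 * m) ^ T := hpow
    _ ≤ (17 * ε ^ 2 * m) ^ ((1:ℝ) / ε ^ 2) := hrpow
end

section
/- Let α ≥ 1 and m ≥ 1 + 4α² be an integer. For every x ∈ ℝ^n, the support function of the body B_∞^n ∩ α B_2^n satisfies h(x) ≤ |||x|||_m, where |||x|||_m is the supremum over all partitions B_1, …, B_m of {1,…,n} of ∑_{i=1}^m (∑_{k∈B_i} x_k²)^{1/2}. -/
open Finset

/-- The norm `|||x|||_m`: the supremum over all partitions of `{1,…,n}` into `m` blocks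
(encoded as functions `π : Fin n → Fin m`) of `∑_{i<m} (∑_{k ∈ π⁻¹(i)} x_k²)^{1/2}`. -/
noncomputable def tripleNorm {n : ℕ} (m : ℕ) (x : Fin n → ℝ) : ℝ :=
  sSup {t : ℝ | ∃ π : Fin n → Fin m,
    t = ∑ i : Fin m, Real.sqrt (∑ k ∈ Finset.univ.filter (fun k => π k = i), x k ^ 2)}

/-- Montgomery–Smith's comparison: for `α ≥ 1` and `m ≥ 1 + 4α²`, the support function
of `B_∞^n ∩ α B_2^n` is bounded by `|||x|||_m`. -/
theorem support_le_tripleNorm (n m : ℕ) (α : ℝ) (hα : 1 ≤ α)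
    (hm : (1 : ℝ) + 4 * α ^ 2 ≤ m) (x : Fin n → ℝ) :
    ∀ y : Fin n → ℝ, (∀ i, |y i| ≤ 1) → (∑ i, y i ^ 2) ≤ α ^ 2 →
      (∑ i, x i * y i) ≤ tripleNorm m x := by
  classical
  intro y hy hy2
  have hα2 : (1:ℝ) ≤ α ^ 2 := by nlinarith
  have hs0 : ∀ k, (0:ℝ) ≤ y k ^ 2 := fun k => sq_nonneg _
  have hs1 : ∀ k, y k ^ 2 ≤ 1 := by
    intro k
    have := hy k
    nlinarith [abs_nonneg (y k), sq_abs (y k)]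
  set Big : Finset (Fin n) := univ.filter (fun k => 1/2 < y k ^ 2) with hBig
  set Q : Fin n → ℝ := fun k => ∑ j ∈ univ.filter (fun j => ¬ (1/2 < y j ^ 2) ∧ j < k), y j ^ 2
    with hQdef
  have hQ0 : ∀ k, 0 ≤ Q k := by
    intro k; apply Finset.sum_nonneg; intro j _; exact hs0 j
  have hQle : ∀ k, Q k ≤ α ^ 2 := by
    intro k
    refine le_trans ?_ hy2
    apply Finset.sum_le_sum_of_subset_of_nonneg (Finset.filter_subset _ _)
    intro j _ _; exact hs0 j
  have hBigcard : (Big.card : ℝ) ≤ 2 * α ^ 2 := by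
    have h1 : (Big.card : ℝ) * (1/2) ≤ ∑ k ∈ Big, y k ^ 2 := by
      have := Finset.card_nsmul_le_sum Big (fun k => y k ^ 2) (1/2)
        (by intro k hk; rw [hBig, Finset.mem_filter] at hk; exact hk.2.le)
      simpa [nsmul_eq_mul] using this
    have h2 : ∑ k ∈ Big, y k ^ 2 ≤ α ^ 2 := by
      refine le_trans ?_ hy2
      apply Finset.sum_le_sum_of_subset_of_nonneg (Finset.filter_subset _ _)
      intro j _ _; exact hs0 j
    nlinarith
  -- the assignment function
  set g : Fin n → ℕ := fun k =>
    if 1/2 < y k ^ 2 then (Big.filter (fun j => j < k)).card else Big.card + ⌊2 * Q k⌋₊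
    with hg
  have hgm : ∀ k, g k < m := by
    intro k
    have hcast : ((g k : ℝ)) < m := by
      rw [hg]
      by_cases hb : 1/2 < y k ^ 2
      · simp only [hb, if_true]
        have h1 : ((Big.filter (fun j => j < k)).card : ℝ) ≤ Big.card := by
          exact_mod_cast Finset.card_le_card (Finset.filter_subset _ _)
        nlinarith
      · simp only [hb, if_false]
        have h1 : (⌊2 * Q k⌋₊ : ℝ) ≤ 2 * Q k := Nat.floor_le (by positivity)
        have h2 := hQle k
        push_cast
        nlinarith
    exact_mod_cast hcast
  set π : Fin n → Fin m := fun k => ⟨g k, hgm k⟩ with hπ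
  -- ranks of big elements are strictly monotone
  have rank_lt : ∀ a b : Fin n, 1/2 < y a ^ 2 → a < b →
      (Big.filter (fun j => j < a)).card < (Big.filter (fun j => j < b)).card := by
    intro a b ha hab
    apply Finset.card_lt_card
    rw [Finset.ssubset_iff_of_subset]
    · refine ⟨a, ?_, ?_⟩
      · simp only [hBig, Finset.mem_filter, Finset.mem_univ, true_and, Finset.filter_filter]
        exact ⟨ha, hab⟩
      · simp only [hBig, Finset.mem_filter, Finset.mem_univ, true_and, Finset.filter_filter]
        rintro ⟨-, h⟩
        exact lt_irrefl a h
    · intro j hj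
      simp only [Finset.mem_filter] at hj ⊢
      exact ⟨hj.1, hj.2.trans hab⟩
  have rank_lt_card : ∀ a : Fin n, 1/2 < y a ^ 2 →
      (Big.filter (fun j => j < a)).card < Big.card := by
    intro a ha
    apply Finset.card_lt_card
    rw [Finset.ssubset_iff_of_subset (Finset.filter_subset _ _)]
    refine ⟨a, ?_, ?_⟩
    · simp only [hBig, Finset.mem_filter, Finset.mem_univ, true_and]; exact ha
    · simp only [Finset.mem_filter]
      rintro ⟨-, h⟩
      exact lt_irrefl a h
  -- monotonicity of Q
  have hQmono : ∀ a b : Fin n, a ≤ b → Q a ≤ Q b := by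
    intro a b hab
    apply Finset.sum_le_sum_of_subset_of_nonneg
    · intro j hj
      simp only [Finset.mem_filter] at hj ⊢
      exact ⟨hj.1, hj.2.1, lt_of_lt_of_le hj.2.2 hab⟩
    · intro j _ _; exact hs0 j
  -- load bound on each fiber
  have load : ∀ i : Fin m, ∑ k ∈ univ.filter (fun k => π k = i), y k ^ 2 ≤ 1 := by
    intro i
    set B : Finset (Fin n) := univ.filter (fun k => π k = i) with hBdef
    have hmemB : ∀ k, k ∈ B ↔ g k = i.1 := by
      intro k
      simp only [hBdef, Finset.mem_filter, Finset.mem_univ, true_and, hπ, Fin.ext_iff]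
    rcases B.eq_empty_or_nonempty with h | hne
    · rw [h]; simp
    have hk₀B : B.min' hne ∈ B := B.min'_mem hne
    set k₀ : Fin n := B.min' hne with hk₀def
    have hgk₀ : g k₀ = i.1 := (hmemB k₀).1 hk₀B
    by_cases hbig : 1/2 < y k₀ ^ 2
    · -- singleton block
      have hsing : B = {k₀} := by
        apply Finset.eq_singleton_iff_unique_mem.2
        refine ⟨hk₀B, ?_⟩
        intro k hk
        have hgk : g k = g k₀ := by rw [(hmemB k).1 hk, hgk₀]
        by_contra hne'
        have hlt : k₀ < k := lt_of_le_of_ne (B.min'_le k hk) (Ne.symm hne')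
        by_cases hkb : 1/2 < y k ^ 2
        · have := rank_lt k₀ k hbig hlt
          rw [hg] at hgk
          simp only [hkb, hbig, if_true] at hgk
          omega
        · have h1 := rank_lt_card k₀ hbig
          rw [hg] at hgk
          simp only [hkb, hbig, if_true, if_false] at hgk
          omega
      rw [hsing, Finset.sum_singleton]
      exact hs1 k₀
    · -- all members are small
      have hsmall : ∀ k ∈ B, ¬ (1/2 < y k ^ 2) := by
        intro k hk hkb
        have hgk : g k = g k₀ := by rw [(hmemB k).1 hk, hgk₀]
        have h1 := rank_lt_card k hkb
        rw [hg] at hgk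
        simp only [hkb, hbig, if_true, if_false] at hgk
        omega
      have hKB : B.max' hne ∈ B := B.max'_mem hne
      set K : Fin n := B.max' hne with hKdef
      have hKs : ¬ (1/2 < y K ^ 2) := hsmall K hKB
      have hfl : ⌊2 * Q K⌋₊ = ⌊2 * Q k₀⌋₊ := by
        have h1 : g K = g k₀ := by rw [(hmemB K).1 hKB, hgk₀]
        rw [hg] at h1
        simp only [hKs, hbig, if_false] at h1
        omega
      have hQdiff : Q K ≤ Q k₀ + 1/2 := by
        have h1 : 2 * Q K < ⌊2 * Q K⌋₊ + 1 := Nat.lt_floor_add_one _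
        have h2 : (⌊2 * Q k₀⌋₊ : ℝ) ≤ 2 * Q k₀ := Nat.floor_le (by positivity)
        rw [hfl] at h1
        linarith
      -- sum over B.erase K is at most Q K - Q k₀
      have herase : ∑ k ∈ B.erase K, y k ^ 2 ≤ Q K - Q k₀ := by
        have hsub : univ.filter (fun j => ¬ (1/2 < y j ^ 2) ∧ j < k₀)
            ⊆ univ.filter (fun j => ¬ (1/2 < y j ^ 2) ∧ j < K) := by
          intro j hj
          simp only [Finset.mem_filter] at hj ⊢
          exact ⟨hj.1, hj.2.1, lt_of_lt_of_le hj.2.2 (B.min'_le K hKB)⟩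
        have heq : Q K - Q k₀ = ∑ j ∈ (univ.filter (fun j => ¬ (1/2 < y j ^ 2) ∧ j < K)) \
            (univ.filter (fun j => ¬ (1/2 < y j ^ 2) ∧ j < k₀)), y j ^ 2 := by
          rw [Finset.sum_sdiff_eq_sub hsub]
        rw [heq]
        apply Finset.sum_le_sum_of_subset_of_nonneg
        · intro k hk
          have hkB : k ∈ B := Finset.mem_of_mem_erase hk
          have hkne : k ≠ K := Finset.ne_of_mem_erase hk
          simp only [Finset.mem_sdiff, Finset.mem_filter, Finset.mem_univ, true_and]
          refine ⟨⟨hsmall k hkB, lt_of_le_of_ne (B.le_max' k hkB) hkne⟩, ?_⟩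
          rintro ⟨-, hlt⟩
          exact absurd (B.min'_le k hkB) (not_le.2 hlt)
        · intro j _ _; exact hs0 j
      have hsum : ∑ k ∈ B, y k ^ 2 = (∑ k ∈ B.erase K, y k ^ 2) + y K ^ 2 :=
        (Finset.sum_erase_add B _ hKB).symm
      push_neg at hKs
      rw [hsum]
      linarith
  -- per-block Cauchy-Schwarz
  have key : ∀ i : Fin m, ∑ k ∈ univ.filter (fun k => π k = i), x k * y k
      ≤ Real.sqrt (∑ k ∈ univ.filter (fun k => π k = i), x k ^ 2) := by
    intro i
    set B : Finset (Fin n) := univ.filter (fun k => π k = i)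
    rcases le_or_gt (∑ k ∈ B, x k * y k) 0 with h | h
    · exact h.trans (Real.sqrt_nonneg _)
    calc ∑ k ∈ B, x k * y k
        = Real.sqrt ((∑ k ∈ B, x k * y k) ^ 2) := (Real.sqrt_sq h.le).symm
      _ ≤ Real.sqrt ((∑ k ∈ B, x k ^ 2) * (∑ k ∈ B, y k ^ 2)) := by
          apply Real.sqrt_le_sqrt
          exact Finset.sum_mul_sq_le_sq_mul_sq B x y
      _ = Real.sqrt (∑ k ∈ B, x k ^ 2) * Real.sqrt (∑ k ∈ B, y k ^ 2) := by
          rw [Real.sqrt_mul (Finset.sum_nonneg fun j _ => sq_nonneg _)]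
      _ ≤ Real.sqrt (∑ k ∈ B, x k ^ 2) * 1 := by
          apply mul_le_mul_of_nonneg_left _ (Real.sqrt_nonneg _)
          exact Real.sqrt_le_one.2 (load i)
      _ = Real.sqrt (∑ k ∈ B, x k ^ 2) := mul_one _
  -- assemble
  have hfib : ∑ k, x k * y k
      = ∑ i : Fin m, ∑ k ∈ univ.filter (fun k => π k = i), x k * y k := by
    exact (Finset.sum_fiberwise univ π (fun k => x k * y k)).symm
  have hmem : (∑ i : Fin m, Real.sqrt (∑ k ∈ univ.filter (fun k => π k = i), x k ^ 2))
      ∈ {t : ℝ | ∃ π : Fin n → Fin m,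
        t = ∑ i : Fin m, Real.sqrt (∑ k ∈ Finset.univ.filter (fun k => π k = i), x k ^ 2)} :=
    ⟨π, rfl⟩
  have hbdd : BddAbove {t : ℝ | ∃ π : Fin n → Fin m,
      t = ∑ i : Fin m, Real.sqrt (∑ k ∈ Finset.univ.filter (fun k => π k = i), x k ^ 2)} := by
    refine ⟨m * Real.sqrt (∑ k, x k ^ 2), ?_⟩
    rintro t ⟨σ, rfl⟩
    calc ∑ i : Fin m, Real.sqrt (∑ k ∈ univ.filter (fun k => σ k = i), x k ^ 2)
        ≤ ∑ _i : Fin m, Real.sqrt (∑ k, x k ^ 2) := by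
          apply Finset.sum_le_sum
          intro i _
          apply Real.sqrt_le_sqrt
          apply Finset.sum_le_sum_of_subset_of_nonneg (Finset.filter_subset _ _)
          intro j _ _; exact sq_nonneg _
      _ = m * Real.sqrt (∑ k, x k ^ 2) := by
          simp [Finset.sum_const, Finset.card_univ, nsmul_eq_mul]
  calc ∑ k, x k * y k
      = ∑ i : Fin m, ∑ k ∈ univ.filter (fun k => π k = i), x k * y k := hfib
    _ ≤ ∑ i : Fin m, Real.sqrt (∑ k ∈ univ.filter (fun k => π k = i), x k ^ 2) :=
        Finset.sum_le_sum fun i _ => key i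
    _ ≤ tripleNorm m x := le_csSup hbdd hmem
end

section
/- Let 1 ≤ n ≤ N be integers, δ ∈ (0,1], and define Q = {D ∈ 𝒟_n : det D ≥ exp(−δN)}, where 𝒟_n is the set of n×n diagonal matrices whose diagonal entries lie in {1} ∪ {2^{−2^k} : k ≥ 0}. Then |Q| ≤ F(δ, n, N), where F(δ,n,N) = (32δN/n)^n if δ ≥ n/(2N), and F(δ,n,N) = (en/(δN))^{4δN} if δ ≤ n/(2N). -/
set_option maxHeartbeats 1000000

open Finset

/-- A diagonal entry allowed in `𝒟_n`: either `1` or `2^{-2^k}` for some `k ≥ 0`. -/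
def IsDyadicEntry (x : ℝ) : Prop :=
  x = 1 ∨ ∃ k : ℕ, x = (2 : ℝ) ^ (-((2 : ℝ) ^ k))

/-- Finset of tuples with sum at most `M`. -/
def sumLeAux (n M : ℕ) : Finset (Fin n → ℕ) :=
  (Fintype.piFinset fun _ => Finset.range (M+1)).filter (fun e => ∑ i, e i ≤ M)

lemma mem_sumLeAux {n M : ℕ} {e : Fin n → ℕ} : e ∈ sumLeAux n M ↔ ∑ i, e i ≤ M := by
  constructor
  · intro h; exact (Finset.mem_filter.mp h).2
  · intro h
    refine Finset.mem_filter.mpr ⟨Fintype.mem_piFinset.mpr fun i => ?_, h⟩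
    exact Finset.mem_range.mpr (Nat.lt_succ_of_le ((Finset.single_le_sum
      (fun j _ => Nat.zero_le (e j)) (Finset.mem_univ i)).trans h))

lemma hockey (n M : ℕ) :
    ∑ j ∈ Finset.range (M+1), (j + n).choose n = (M + n + 1).choose (n + 1) := by
  induction M with
  | zero => simp
  | succ M ih =>
      rw [Finset.sum_range_succ, ih]
      have : M + 1 + n + 1 = (M + n + 1) + 1 := by ring
      have h2 : M + 1 + n = M + n + 1 := by ring
      rw [this, h2, Nat.choose_succ_succ (M + n + 1) n]
      exact Nat.add_comm _ _

lemma card_sumLeAux (n M : ℕ) : (sumLeAux n M).card ≤ (M + n).choose n := by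
  induction n generalizing M with
  | zero =>
      simpa using Finset.card_le_one.mpr (fun a _ b _ => Subsingleton.elim a b)
  | succ n ih =>
      have hsub : (sumLeAux (n+1) M).card ≤
          ((Finset.range (M+1)).sigma (fun j => sumLeAux n (M - j))).card := by
        apply Finset.card_le_card_of_injOn
          (fun e => ⟨e (Fin.last n), Fin.init e⟩)
        · intro e he
          have hs := mem_sumLeAux.mp he
          rw [Fin.sum_univ_castSucc] at hs
          refine Finset.mem_sigma.mpr ⟨?_, ?_⟩
          · dsimp only
            exact Finset.mem_range.mpr (by omega)
          · dsimp only
            refine mem_sumLeAux.mpr ?_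
            rw [show (∑ i, Fin.init e i) = ∑ i : Fin n, e i.castSucc from rfl]
            omega
        · intro e _ e' _ h
          have h1 : e (Fin.last n) = e' (Fin.last n) := congrArg Sigma.fst h
          have h2 : Fin.init e = Fin.init e' := by
            have := congrArg Sigma.snd h
            simpa using this
          rw [← Fin.snoc_init_self e, ← Fin.snoc_init_self e', h1, h2]
      calc (sumLeAux (n+1) M).card
          ≤ ∑ j ∈ Finset.range (M+1), (sumLeAux n (M - j)).card := by
            rw [← Finset.card_sigma]; exact hsub
        _ ≤ ∑ j ∈ Finset.range (M+1), ((M - j) + n).choose n :=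
            Finset.sum_le_sum fun j _ => ih (M - j)
        _ = (M + n + 1).choose (n + 1) := by
            rw [← hockey n M]
            rw [← Finset.sum_range_reflect (fun j => (j + n).choose n) (M+1)]
            refine Finset.sum_congr rfl fun j hj => ?_
            have : M + 1 - 1 - j = M - j := by omega
            rw [this]
        _ = (M + (n+1)).choose (n+1) := by ring_nf

lemma choose_le_pow_real (c b : ℕ) (hb : 1 ≤ b) :
    ((c.choose b : ℕ) : ℝ) ≤ (Real.exp 1 * c / b) ^ b := by
  have hb0 : (0:ℝ) < b := by exact_mod_cast hb
  have hfact : (0:ℝ) < (Nat.factorial b : ℝ) := by exact_mod_cast b.factorial_pos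
  have h1n : c.choose b * Nat.factorial b ≤ c ^ b := by
    rw [mul_comm, ← Nat.descFactorial_eq_factorial_mul_choose]
    exact Nat.descFactorial_le_pow c b
  have h1 : ((c.choose b : ℕ) : ℝ) * (Nat.factorial b : ℝ) ≤ (c:ℝ) ^ b := by exact_mod_cast h1n
  have h2 : (b:ℝ) ^ b ≤ Real.exp 1 ^ b * (Nat.factorial b : ℝ) := by
    have hs : (b:ℝ)^b / (Nat.factorial b : ℝ) ≤ Real.exp b :=
      calc (b:ℝ)^b / (Nat.factorial b : ℝ) ≤ ∑ i ∈ Finset.range (b+1), (b:ℝ)^i / Nat.factorial i := by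
            exact Finset.single_le_sum (f := fun i => (b:ℝ)^i / (Nat.factorial i : ℝ))
              (fun i _ => by positivity) (by simp)
        _ ≤ Real.exp b := Real.sum_le_exp_of_nonneg (le_of_lt hb0) (b+1)
    have he : Real.exp (b:ℝ) = Real.exp 1 ^ b := by
      rw [← Real.exp_nat_mul]; norm_num
    rw [div_le_iff₀ hfact, he] at hs; linarith
  have key : ((c.choose b : ℕ) : ℝ) * (b:ℝ)^b ≤ Real.exp 1 ^ b * (c:ℝ)^b :=
    calc ((c.choose b : ℕ) : ℝ) * (b:ℝ)^b
        ≤ ((c.choose b : ℕ) : ℝ) * (Real.exp 1 ^ b * (Nat.factorial b : ℝ)) :=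
          mul_le_mul_of_nonneg_left h2 (Nat.cast_nonneg _)
      _ = Real.exp 1 ^ b * (((c.choose b : ℕ) : ℝ) * (Nat.factorial b : ℝ)) := by ring
      _ ≤ Real.exp 1 ^ b * (c:ℝ)^b := mul_le_mul_of_nonneg_left h1 (by positivity)
  rw [div_pow, mul_pow, le_div_iff₀ (by positivity)]
  exact key

lemma dyadic_entry (x : ℝ) (hx : IsDyadicEntry x) :
    0 < x ∧
    (if ⌊-Real.logb 2 x⌋₊ = 0 then (1:ℝ)
      else (2:ℝ) ^ (-((⌊-Real.logb 2 x⌋₊ : ℕ) : ℝ))) = x ∧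
    Real.log x = -((⌊-Real.logb 2 x⌋₊ : ℕ) : ℝ) * Real.log 2 := by
  rcases hx with h1 | ⟨k, hk⟩
  · subst h1
    simp [Real.logb_one]
  · subst hk
    have hlogb : Real.logb 2 ((2:ℝ) ^ (-((2:ℝ)^k))) = -((2:ℝ)^k) :=
      Real.logb_rpow (by norm_num) (by norm_num)
    have hfloor : ⌊-Real.logb 2 ((2:ℝ) ^ (-((2:ℝ)^k)))⌋₊ = 2^k := by
      rw [hlogb, neg_neg, show ((2:ℝ)^k) = ((2^k : ℕ) : ℝ) by push_cast; ring]
      exact Nat.floor_natCast _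
    refine ⟨Real.rpow_pos_of_pos two_pos _, ?_, ?_⟩
    · rw [hfloor, if_neg (Nat.two_pow_pos k).ne']
      congr 1
      push_cast; ring
    · rw [hfloor, Real.log_rpow two_pos]
      push_cast; ring

/-- Counting diagonal matrices with not-too-small determinant: the set
`Q = {D ∈ 𝒟_n : det D ≥ e^{-δN}}` (encoded by diagonals `d : Fin n → ℝ`) is finite, with
`|Q| ≤ (32δN/n)^n` when `δ ≥ n/(2N)` and `|Q| ≤ (en/(δN))^{4δN}` when `δ ≤ n/(2N)`. -/
theorem card_diagonal_matrices_large_det (n N : ℕ) (hn : 1 ≤ n) (hnN : n ≤ N)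
    (δ : ℝ) (hδ0 : 0 < δ) (hδ1 : δ ≤ 1) :
    ∀ Q : Set (Fin n → ℝ),
      Q = {d | (∀ i, IsDyadicEntry (d i)) ∧ Real.exp (-δ * N) ≤ ∏ i, d i} →
      Q.Finite ∧
      ((n : ℝ) / (2 * N) ≤ δ → (Nat.card Q : ℝ) ≤ (32 * δ * N / n) ^ n) ∧
      (δ ≤ (n : ℝ) / (2 * N) →
        (Nat.card Q : ℝ) ≤ (Real.exp 1 * n / (δ * N)) ^ (4 * δ * N)) := by
  intro Q hQ
  have hN1 : 1 ≤ N := hn.trans hnN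
  have hN0 : (0:ℝ) < N := by exact_mod_cast hN1
  have hn0 : (0:ℝ) < n := by exact_mod_cast hn
  have hδN : (0:ℝ) < δ * N := mul_pos hδ0 hN0
  set M : ℕ := ⌊2 * δ * N⌋₊ with hMdef
  have hMle : (M:ℝ) ≤ 2 * δ * N := Nat.floor_le (by positivity)
  set g : (Fin n → ℕ) → (Fin n → ℝ) :=
    fun e i => if e i = 0 then 1 else (2:ℝ) ^ (-((e i : ℕ) : ℝ)) with hg
  have hl2 : (0.6931471803:ℝ) < Real.log 2 := Real.log_two_gt_d9
  have hsub : Q ⊆ g '' ↑(sumLeAux n M) := by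
    intro d hd
    rw [hQ] at hd
    obtain ⟨hdyad, hprod⟩ := hd
    set φ : Fin n → ℕ := fun i => ⌊-Real.logb 2 (d i)⌋₊ with hφ
    have hent := fun i => dyadic_entry (d i) (hdyad i)
    have hpos : ∀ i, 0 < d i := fun i => (hent i).1
    have hrec : g φ = d := funext fun i => (hent i).2.1
    have hlog : ∀ i, Real.log (d i) = -((φ i : ℕ) : ℝ) * Real.log 2 :=
      fun i => (hent i).2.2
    have hlogp : Real.log (∏ i, d i) = ∑ i, Real.log (d i) :=
      Real.log_prod (fun i _ => (hpos i).ne')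
    have h2 : -(δ * N) ≤ Real.log (∏ i, d i) := by
      have := Real.log_le_log (Real.exp_pos _) hprod
      rwa [Real.log_exp, neg_mul] at this
    have hsumlog : ∑ i, Real.log (d i) = -(∑ i, ((φ i : ℕ):ℝ)) * Real.log 2 := by
      rw [Finset.sum_congr rfl (fun i _ => hlog i), ← Finset.sum_mul, ← Finset.sum_neg_distrib]
    have hS : (∑ i, ((φ i : ℕ):ℝ)) * Real.log 2 ≤ δ * N := by
      rw [hlogp, hsumlog] at h2; linarith
    have hSnn : (0:ℝ) ≤ ∑ i, ((φ i : ℕ):ℝ) :=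
      Finset.sum_nonneg fun i _ => Nat.cast_nonneg _
    have hS2 : (∑ i, ((φ i : ℕ):ℝ)) ≤ 2 * δ * N := by nlinarith
    have hmem : φ ∈ sumLeAux n M := by
      refine mem_sumLeAux.mpr (Nat.le_floor ?_)
      push_cast
      exact hS2
    exact ⟨φ, hmem, hrec⟩
  have hfin : Q.Finite :=
    Set.Finite.subset (((sumLeAux n M).finite_toSet).image g) hsub
  have hcard : Nat.card Q ≤ (M + n).choose n := by
    have h1 : Nat.card Q ≤ Nat.card (g '' ↑(sumLeAux n M)) :=
      Nat.card_mono (((sumLeAux n M).finite_toSet).image g) hsub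
    have h2 : Nat.card (g '' ↑(sumLeAux n M)) ≤ Nat.card ↑(sumLeAux n M) :=
      Nat.card_image_le (sumLeAux n M).finite_toSet
    rw [Nat.card_eq_finsetCard] at h2
    exact h1.trans (h2.trans (card_sumLeAux n M))
  have hcR : (Nat.card Q : ℝ) ≤ (((M + n).choose n : ℕ) : ℝ) := by exact_mod_cast hcard
  have hexp1 : (2.7182818283:ℝ) < Real.exp 1 := Real.exp_one_gt_d9
  have hexp2 : Real.exp 1 < 2.7182818286 := Real.exp_one_lt_d9
  refine ⟨hfin, ?_, ?_⟩
  · intro hc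
    have hn2 : (n:ℝ) ≤ 2 * δ * N := by
      rw [div_le_iff₀ (by positivity)] at hc; linarith
    have hA : (((M+n).choose n : ℕ) : ℝ) ≤ (Real.exp 1 * ((M+n : ℕ):ℝ) / n) ^ n :=
      choose_le_pow_real (M+n) n hn
    have hbase : Real.exp 1 * ((M+n : ℕ):ℝ) / n ≤ 32 * δ * N / n := by
      have hMn : ((M+n:ℕ):ℝ) ≤ 4 * δ * N := by push_cast; linarith
      have hMnn : (0:ℝ) ≤ ((M+n:ℕ):ℝ) := Nat.cast_nonneg _
      rw [div_le_div_iff₀ hn0 hn0]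
      have u1 : Real.exp 1 * ((M+n:ℕ):ℝ) ≤ 32 * δ * N := by nlinarith
      nlinarith [mul_le_mul_of_nonneg_right u1 hn0.le]
    calc (Nat.card Q : ℝ) ≤ (((M+n).choose n : ℕ) : ℝ) := hcR
      _ ≤ (Real.exp 1 * ((M+n : ℕ):ℝ) / n) ^ n := hA
      _ ≤ (32 * δ * N / n) ^ n := pow_le_pow_left₀ (by positivity) hbase n
  · intro hc
    have hn2 : 2 * δ * N ≤ (n:ℝ) := by
      rw [le_div_iff₀ (by positivity)] at hc; linarith
    set B : ℝ := Real.exp 1 * n / (δ * N) with hB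
    have hB2e : 2 * Real.exp 1 ≤ B := by
      rw [hB, le_div_iff₀ hδN]
      nlinarith
    have hB1 : (1:ℝ) ≤ B := by nlinarith
    rcases Nat.eq_zero_or_pos M with hM0 | hM1
    · have he1 : (((M+n).choose n : ℕ) : ℝ) = 1 := by rw [hM0]; simp
      rw [he1] at hcR
      exact hcR.trans (Real.one_le_rpow hB1 (by positivity))
    · have hMδ : δ * N ≤ (M:ℝ) := by
        rcases le_or_gt (δ * N) 1 with h | h
        · have : (1:ℝ) ≤ (M:ℝ) := by exact_mod_cast hM1
          linarith
        · have := Nat.lt_floor_add_one (2 * δ * N)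
          rw [← hMdef] at this
          linarith
      have hM0R : (0:ℝ) < (M:ℝ) := by exact_mod_cast hM1
      have hsym : (M+n).choose n = (M+n).choose M := by
        have h := Nat.choose_symm (Nat.le_add_left n M)
        rw [show M + n - n = M by omega] at h
        exact h.symm
      have hA : (((M+n).choose M : ℕ) : ℝ) ≤ (Real.exp 1 * ((M+n : ℕ):ℝ) / M) ^ M :=
        choose_le_pow_real (M+n) M hM1
      have hbase : Real.exp 1 * ((M+n : ℕ):ℝ) / M ≤ B^2 := by
        rw [hB, div_pow, mul_pow, div_le_div_iff₀ hM0R (by positivity)]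
        have hMn : ((M+n:ℕ):ℝ) ≤ 2 * n := by push_cast; linarith
        have hE0 : (0:ℝ) < Real.exp 1 := Real.exp_pos 1
        have t1 : Real.exp 1 * ((M+n:ℕ):ℝ) * (δ*N)^2 ≤ Real.exp 1 * (2*n) * (δ*N)^2 := by
          nlinarith [mul_le_mul_of_nonneg_right hMn
            (by positivity : (0:ℝ) ≤ Real.exp 1 * (δ*N)^2)]
        have t2 : Real.exp 1 * (2*n) * (δ*N)^2 ≤ Real.exp 1 * (2*n) * ((δ*N) * M) := by
          have u2 : (δ*N)^2 ≤ (δ*N) * M := by nlinarith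
          nlinarith [mul_le_mul_of_nonneg_right u2
            (by positivity : (0:ℝ) ≤ Real.exp 1 * (2*(n:ℝ)))]
        have t3 : Real.exp 1 * (2*n) * ((δ*N)*M) ≤ Real.exp 1 * n * n * (M:ℝ) := by
          have h2s : 2*(δ*N) ≤ (n:ℝ) := by linarith
          nlinarith [mul_le_mul_of_nonneg_right h2s
            (by positivity : (0:ℝ) ≤ Real.exp 1 * (n:ℝ) * (M:ℝ))]
        have t4 : Real.exp 1 * n * n * (M:ℝ) ≤ Real.exp 1 ^2 * n^2 * M := by
          have uE : Real.exp 1 ≤ Real.exp 1 ^ 2 := by nlinarith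
          nlinarith [mul_le_mul_of_nonneg_right uE
            (by positivity : (0:ℝ) ≤ (n:ℝ)^2 * (M:ℝ))]
        linarith
      have hc2 : (Nat.card Q : ℝ) ≤ B ^ (((2*M : ℕ)):ℝ) := by
        rw [Real.rpow_natCast]
        calc (Nat.card Q : ℝ) ≤ (((M+n).choose n : ℕ) : ℝ) := hcR
          _ = (((M+n).choose M : ℕ) : ℝ) := by rw [hsym]
          _ ≤ (Real.exp 1 * ((M+n : ℕ):ℝ) / M) ^ M := hA
          _ ≤ (B^2) ^ M := pow_le_pow_left₀ (by positivity) hbase M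
          _ = B ^ (2*M) := by rw [← pow_mul]
      refine hc2.trans (Real.rpow_le_rpow_of_exponent_le hB1 ?_)
      push_cast
      linarith
end

section
/- Let N ≥ 2n and x_1, …, x_N ∈ ℝ^n with ‖x_i‖_2 ≤ λ√n for all i, where λ ≥ 1. If K = absconv{x_1,…,x_N} and N ≤ e^n, then |K|^{1/n} ≤ C·λ·√(ln(N/n)/n), where C is an absolute constant. -/
open Finset MeasureTheory
open scoped RealInnerProductSpace ENNReal

section Maurey

variable {E : Type*} [NormedAddCommGroup E] [InnerProductSpace ℝ E]
variable {ι : Type*} [Fintype ι]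

lemma weight_total (w : ι → ℝ) (hw1 : ∑ i, w i = 1) (k : ℕ) :
    ∑ g : Fin k → ι, ∏ j, w (g j) = 1 := by
  classical
  rw [← Fintype.piFinset_univ, ← Finset.prod_univ_sum]
  simp [hw1]

lemma sum_fin_succ_fun {M : Type*} [AddCommMonoid M] (k : ℕ) (F : (Fin (k+1) → ι) → M) :
    ∑ g : Fin (k+1) → ι, F g = ∑ a : ι, ∑ g : Fin k → ι, F (Fin.cons a g) := by
  classical
  rw [← Equiv.sum_comp (Fin.consEquiv (fun _ : Fin (k+1) => ι)) F, Fintype.sum_prod_type]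
  rfl

lemma maurey_mean (w : ι → ℝ) (u : ι → E) (hw1 : ∑ i, w i = 1) :
    ∀ k : ℕ, ∑ g : Fin k → ι, (∏ j, w (g j)) • (∑ j, u (g j))
      = (k : ℝ) • ∑ i, w i • u i := by
  classical
  intro k
  induction k with
  | zero => simp
  | succ k ih =>
    rw [sum_fin_succ_fun]
    have key : ∀ a : ι,
        ∑ g : Fin k → ι, (∏ j, w ((Fin.cons a g : Fin (k+1) → ι) j)) • (∑ j, u ((Fin.cons a g : Fin (k+1) → ι) j))
          = w a • u a + w a • ((k : ℝ) • ∑ i, w i • u i) := by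
      intro a
      simp only [Fin.prod_univ_succ, Fin.sum_univ_succ, Fin.cons_zero, Fin.cons_succ]
      have step : ∀ g : Fin k → ι, (w a * ∏ j, w (g j)) • (u a + ∑ j, u (g j))
          = (∏ j, w (g j)) • (w a • u a) + w a • ((∏ j, w (g j)) • ∑ j, u (g j)) := by
        intro g
        module
      rw [Finset.sum_congr rfl fun g _ => step g, Finset.sum_add_distrib,
        ← Finset.sum_smul, weight_total w hw1 k, one_smul, ← Finset.smul_sum, ih]
    rw [Finset.sum_congr rfl fun a _ => key a, Finset.sum_add_distrib,
      ← Finset.sum_smul, hw1, one_smul]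
    push_cast
    rw [add_smul, one_smul, add_comm]



lemma maurey_identity (w : ι → ℝ) (u : ι → E) (hw1 : ∑ i, w i = 1)
    (hc : ∑ i, w i • u i = 0) :
    ∀ k : ℕ, ∑ g : Fin k → ι, (∏ j, w (g j)) * ‖∑ j, u (g j)‖ ^ 2
      = (k : ℝ) * ∑ i, w i * ‖u i‖ ^ 2 := by
  classical
  intro k
  induction k with
  | zero => simp
  | succ k ih =>
    rw [sum_fin_succ_fun]
    have hmean : ∑ g : Fin k → ι, (∏ j, w (g j)) • (∑ j, u (g j)) = (0 : E) := by
      rw [maurey_mean w u hw1 k, hc, smul_zero]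
    have key : ∀ a : ι,
        ∑ g : Fin k → ι, (∏ j, w ((Fin.cons a g : Fin (k+1) → ι) j))
            * ‖∑ j, u ((Fin.cons a g : Fin (k+1) → ι) j)‖ ^ 2
          = w a * ‖u a‖ ^ 2 + w a * ((k : ℝ) * ∑ i, w i * ‖u i‖ ^ 2) := by
      intro a
      simp only [Fin.prod_univ_succ, Fin.sum_univ_succ, Fin.cons_zero, Fin.cons_succ]
      have expand : ∀ g : Fin k → ι,
          (w a * ∏ j, w (g j)) * ‖u a + ∑ j, u (g j)‖ ^ 2
            = (∏ j, w (g j)) * (w a * ‖u a‖ ^ 2)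
              + (2 * w a) * ⟪u a, (∏ j, w (g j)) • ∑ j, u (g j)⟫
              + w a * ((∏ j, w (g j)) * ‖∑ j, u (g j)‖ ^ 2) := by
        intro g
        rw [@norm_add_sq_real, real_inner_smul_right]
        ring
      rw [Finset.sum_congr rfl fun g _ => expand g, Finset.sum_add_distrib,
        Finset.sum_add_distrib, ← Finset.sum_mul, weight_total w hw1 k, one_mul,
        ← Finset.mul_sum, ← Finset.mul_sum, ← inner_sum]
      rw [hmean, inner_zero_right, mul_zero, add_zero, ih]
    rw [Finset.sum_congr rfl fun a _ => key a, Finset.sum_add_distrib, ← Finset.sum_mul, hw1,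
      one_mul]
    push_cast
    ring


end Maurey

section Approx

variable {E : Type*} [NormedAddCommGroup E] [InnerProductSpace ℝ E]

lemma maurey_approx {ι : Type*} [Fintype ι] [Nonempty ι] (p : ι → E) {R : ℝ}
    (hR : ∀ c, ‖p c‖ ≤ R) {y : E} (hy : y ∈ convexHull ℝ (Set.range p))
    {k : ℕ} (hk : 0 < k) :
    ∃ g : Fin k → ι, ‖y - (k : ℝ)⁻¹ • ∑ j, p (g j)‖ ≤ 2 * R / Real.sqrt k := by
  classical
  have hR0 : 0 ≤ R := le_trans (norm_nonneg _) (hR (Classical.arbitrary ι))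
  have hyR : ‖y‖ ≤ R := by
    have : convexHull ℝ (Set.range p) ⊆ Metric.closedBall (0 : E) R :=
      convexHull_min (by rintro - ⟨c, rfl⟩; simpa using hR c) (convex_closedBall _ _)
    simpa using this hy
  rw [_root_.convexHull_eq] at hy
  obtain ⟨ι', t, w, z, hw0, hw1, hz, hcm⟩ := hy
  -- choose preimages
  have hzc : ∀ i : {i // i ∈ t}, ∃ c : ι, p c = z i.1 := fun i => hz i.1 i.2
  choose q hq using hzc
  have hk0 : (0 : ℝ) < (k : ℝ) := by exact_mod_cast hk
  set w' : {i // i ∈ t} → ℝ := fun i => w i.1 with hw'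
  set u : {i // i ∈ t} → E := fun i => p (q i) - y with hu
  have hw'1 : ∑ i : {i // i ∈ t}, w' i = 1 := by
    rw [Finset.univ_eq_attach]; rw [Finset.sum_attach t w]; exact hw1
  have hzy : ∑ i : {i // i ∈ t}, w' i • z i.1 = y := by
    rw [Finset.univ_eq_attach]
    rw [Finset.sum_attach t (fun i => w i • z i)]
    rw [← Finset.centerMass_eq_of_sum_1 _ _ hw1]
    exact hcm
  have hc : ∑ i : {i // i ∈ t}, w' i • u i = 0 := by
    simp only [hu, smul_sub]
    rw [Finset.sum_sub_distrib]
    have : ∀ i : {i // i ∈ t}, w' i • p (q i) = w' i • z i.1 := fun i => by rw [hq i]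
    rw [Finset.sum_congr rfl fun i _ => this i, hzy, ← Finset.sum_smul, hw'1, one_smul, sub_self]
  have hub : ∀ i : {i // i ∈ t}, ‖u i‖ ≤ 2 * R := by
    intro i
    calc ‖p (q i) - y‖ ≤ ‖p (q i)‖ + ‖y‖ := norm_sub_le _ _
    _ ≤ R + R := add_le_add (hR _) hyR
    _ = 2 * R := by ring
  have hid := maurey_identity w' u hw'1 hc k
  -- the total is at most k * (2R)^2
  have htot : ∑ g : Fin k → {i // i ∈ t}, (∏ j, w' (g j)) * ‖∑ j, u (g j)‖ ^ 2
      ≤ (k : ℝ) * (2 * R) ^ 2 := by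
    rw [hid]
    have : ∑ i : {i // i ∈ t}, w' i * ‖u i‖ ^ 2 ≤ ∑ i : {i // i ∈ t}, w' i * (2 * R) ^ 2 := by
      apply Finset.sum_le_sum
      intro i _
      have h0 : 0 ≤ w' i := hw0 i.1 i.2
      have h1 := hub i
      have h2 : ‖u i‖ ^ 2 ≤ (2 * R) ^ 2 := by nlinarith [norm_nonneg (u i)]
      exact mul_le_mul_of_nonneg_left h2 h0
    have h2 : ∑ i : {i // i ∈ t}, w' i * (2 * R) ^ 2 = (2 * R) ^ 2 := by
      rw [← Finset.sum_mul, hw'1, one_mul]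
    exact mul_le_mul_of_nonneg_left (le_of_le_of_eq this h2) hk0.le
  -- extract a good g
  have hex : ∃ g : Fin k → {i // i ∈ t}, ‖∑ j, u (g j)‖ ^ 2 ≤ (k : ℝ) * (2 * R) ^ 2 := by
    by_contra hcon
    push_neg at hcon
    have hpos : ∃ g : Fin k → {i // i ∈ t}, 0 < ∏ j, w' (g j) := by
      by_contra hcon2
      push_neg at hcon2
      have : ∑ g : Fin k → {i // i ∈ t}, ∏ j, w' (g j) ≤ 0 :=
        Finset.sum_nonpos fun g _ => hcon2 g
      rw [weight_total w' hw'1 k] at this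
      linarith
    obtain ⟨g0, hg0⟩ := hpos
    have hlt : (k : ℝ) * (2 * R) ^ 2 = ∑ g : Fin k → {i // i ∈ t}, (∏ j, w' (g j)) * ((k : ℝ) * (2 * R) ^ 2) := by
      rw [← Finset.sum_mul, weight_total w' hw'1 k, one_mul]
    have : ∑ g : Fin k → {i // i ∈ t}, (∏ j, w' (g j)) * ((k : ℝ) * (2 * R) ^ 2)
        < ∑ g : Fin k → {i // i ∈ t}, (∏ j, w' (g j)) * ‖∑ j, u (g j)‖ ^ 2 := by
      apply Finset.sum_lt_sum
      · intro g _
        have hP : 0 ≤ ∏ j, w' (g j) := Finset.prod_nonneg fun j _ => hw0 _ (g j).2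
        exact mul_le_mul_of_nonneg_left (hcon g).le hP
      · exact ⟨g0, Finset.mem_univ g0, by
          exact mul_lt_mul_of_pos_left (hcon g0) hg0⟩
    linarith
  obtain ⟨g', hg'⟩ := hex
  refine ⟨fun j => q (g' j), ?_⟩
  have hsum : ∑ j : Fin k, u (g' j) = ∑ j : Fin k, p (q (g' j)) - (k : ℝ) • y := by
    simp only [hu]
    rw [Finset.sum_sub_distrib, Finset.sum_const, Finset.card_univ, Fintype.card_fin]
    rw [Nat.cast_smul_eq_nsmul]
  have hnorm : ‖∑ j : Fin k, p (q (g' j)) - (k : ℝ) • y‖ ≤ Real.sqrt k * (2 * R) := by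
    rw [← hsum]
    have h1 : ‖∑ j : Fin k, u (g' j)‖ = Real.sqrt (‖∑ j : Fin k, u (g' j)‖ ^ 2) :=
      (Real.sqrt_sq (norm_nonneg _)).symm
    rw [h1]
    calc Real.sqrt (‖∑ j : Fin k, u (g' j)‖ ^ 2) ≤ Real.sqrt ((k : ℝ) * (2 * R) ^ 2) :=
      Real.sqrt_le_sqrt hg'
    _ = Real.sqrt k * (2 * R) := by
      rw [Real.sqrt_mul (by positivity), Real.sqrt_sq (by positivity)]
  have heq : y - (k : ℝ)⁻¹ • ∑ j : Fin k, p (q (g' j))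
      = -((k : ℝ)⁻¹ • (∑ j : Fin k, p (q (g' j)) - (k : ℝ) • y)) := by
    rw [smul_sub, smul_smul, inv_mul_cancel₀ hk0.ne', one_smul, neg_sub]
  rw [heq, norm_neg, norm_smul, Real.norm_eq_abs, abs_of_pos (by positivity)]
  calc (k : ℝ)⁻¹ * ‖∑ j : Fin k, p (q (g' j)) - (k : ℝ) • y‖
      ≤ (k : ℝ)⁻¹ * (Real.sqrt k * (2 * R)) := by
        apply mul_le_mul_of_nonneg_left hnorm (by positivity)
  _ = 2 * R / Real.sqrt k := by
      rw [eq_div_iff (by positivity : Real.sqrt (k:ℝ) ≠ 0)]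
      have : Real.sqrt k * Real.sqrt k = (k : ℝ) := Real.mul_self_sqrt hk0.le
      field_simp
      nlinarith [this]

end Approx

lemma vol_closedBall_le {n : ℕ} (hn : 1 ≤ n) {r : ℝ} (hr : 0 < r) :
    (volume (Metric.closedBall (0 : EuclideanSpace ℝ (Fin n)) r)).toReal
      ≤ (r * Real.sqrt (2 * Real.pi * Real.exp 1 / n)) ^ n := by
  have hn0 : (0 : ℝ) < n := by exact_mod_cast hn
  set b : ℝ := n / (2 * r ^ 2) with hb
  have hb0 : 0 < b := by positivity
  have hfr : Module.finrank ℝ (EuclideanSpace ℝ (Fin n)) = n := by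
    simp [finrank_euclideanSpace]
  have hint : ∫ v : EuclideanSpace ℝ (Fin n), Real.exp (-b * ‖v‖ ^ 2)
      = (Real.pi / b) ^ ((n : ℝ) / 2) := by
    rw [GaussianFourier.integral_rexp_neg_mul_sq_norm hb0, hfr]
  have hInt : Integrable (fun v : EuclideanSpace ℝ (Fin n) => Real.exp (-b * ‖v‖ ^ 2)) := by
    have h := (GaussianFourier.integrable_cexp_neg_mul_sq_norm_add (V := EuclideanSpace ℝ (Fin n))
      (b := (b : ℂ)) (by simpa using hb0) 0 0).norm
    refine h.congr (Filter.Eventually.of_forall fun v => ?_)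
    have harg : (-(b:ℂ) * (‖v‖:ℂ) ^ 2 + 0 * ((inner ℝ (0 : EuclideanSpace ℝ (Fin n)) v : ℝ) : ℂ))
        = ((-b * ‖v‖ ^ 2 : ℝ) : ℂ) := by push_cast; ring
    simp only [harg, Complex.norm_exp, Complex.ofReal_re]
  have hmeas := (measurableSet_closedBall :
    MeasurableSet (Metric.closedBall (0 : EuclideanSpace ℝ (Fin n)) r))
  have hfin : volume (Metric.closedBall (0 : EuclideanSpace ℝ (Fin n)) r) ≠ ⊤ :=
    measure_closedBall_lt_top.ne
  have key : Real.exp (-(b * r ^ 2)) *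
      (volume (Metric.closedBall (0 : EuclideanSpace ℝ (Fin n)) r)).toReal
      ≤ (Real.pi / b) ^ ((n : ℝ) / 2) := by
    have h1 := setIntegral_ge_of_const_le (μ := volume) hmeas hfin
      (fun x hx => by
        have hx' : ‖x‖ ≤ r := by simpa using hx
        have hx2 : ‖x‖ ^ 2 ≤ r ^ 2 := by nlinarith [norm_nonneg x]
        have : -(b * r ^ 2) ≤ -b * ‖x‖ ^ 2 := by
          nlinarith [mul_nonneg hb0.le (sub_nonneg.2 hx2)]
        exact Real.exp_le_exp.mpr this)
      hInt.integrableOn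
    have h2 := setIntegral_le_integral (μ := volume)
      (s := Metric.closedBall (0 : EuclideanSpace ℝ (Fin n)) r) hInt
      (Filter.Eventually.of_forall fun x => (Real.exp_pos _).le)
    calc Real.exp (-(b * r ^ 2)) *
        (volume (Metric.closedBall (0 : EuclideanSpace ℝ (Fin n)) r)).toReal
        ≤ ∫ x in Metric.closedBall (0 : EuclideanSpace ℝ (Fin n)) r,
            Real.exp (-b * ‖x‖ ^ 2) := by rw [smul_eq_mul, mul_comm] at h1; exact h1
      _ ≤ ∫ v : EuclideanSpace ℝ (Fin n), Real.exp (-b * ‖v‖ ^ 2) := h2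
      _ = (Real.pi / b) ^ ((n : ℝ) / 2) := hint
  have hbr : b * r ^ 2 = n / 2 := by
    rw [hb]; field_simp
  have hpib : Real.pi / b = 2 * Real.pi * r ^ 2 / n := by
    rw [hb]; field_simp
  have step : (volume (Metric.closedBall (0 : EuclideanSpace ℝ (Fin n)) r)).toReal
      ≤ (2 * Real.pi * r ^ 2 / n) ^ ((n : ℝ) / 2) * Real.exp ((n : ℝ) / 2) := by
    rw [hbr, hpib] at key
    have hA : Real.exp (-((n:ℝ)/2)) * Real.exp ((n:ℝ)/2) = 1 := by
      rw [← Real.exp_add]; simp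
    calc (volume (Metric.closedBall (0 : EuclideanSpace ℝ (Fin n)) r)).toReal
        = (Real.exp (-((n:ℝ)/2)) *
            (volume (Metric.closedBall (0 : EuclideanSpace ℝ (Fin n)) r)).toReal)
          * Real.exp ((n:ℝ)/2) := by
          rw [mul_comm (Real.exp (-((n:ℝ)/2))), mul_assoc, hA, mul_one]
      _ ≤ (2 * Real.pi * r ^ 2 / n) ^ ((n : ℝ) / 2) * Real.exp ((n:ℝ)/2) :=
          mul_le_mul_of_nonneg_right key (Real.exp_pos _).le
  refine le_trans step (le_of_eq ?_)
  have h3 : Real.exp ((n : ℝ) / 2) = (Real.exp 1) ^ ((n : ℝ) / 2) := by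
    rw [Real.exp_one_rpow]
  rw [h3, ← Real.mul_rpow (by positivity) (by positivity)]
  have h4 : r * Real.sqrt (2 * Real.pi * Real.exp 1 / n)
      = Real.sqrt (2 * Real.pi * r ^ 2 / n * Real.exp 1) := by
    rw [← Real.sqrt_sq hr.le, ← Real.sqrt_mul (sq_nonneg r)]
    rw [Real.sqrt_sq hr.le]
    congr 1
    ring
  rw [h4]
  rw [Real.sqrt_eq_rpow, ← Real.rpow_natCast ((2 * Real.pi * r ^ 2 / n * Real.exp 1) ^ ((1:ℝ)/2)) n,
    ← Real.rpow_mul (by positivity)]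
  congr 1
  ring

set_option maxHeartbeats 2000000 in
/-- Volume bound for the absolute convex hull of `N` points of norm at most `λ√n` in `ℝ^n`
(Bárány–Füredi, Carl–Pajor, Gluskin): there is an absolute constant `C` with
`|absconv{x_i}|^{1/n} ≤ C λ √(ln(N/n)/n)` whenever `2n ≤ N ≤ e^n`. -/
theorem volume_absconv_points :
    ∃ C : ℝ, 0 < C ∧
      ∀ (n N : ℕ), 1 ≤ n → 2 * n ≤ N → (N : ℝ) ≤ Real.exp n →
      ∀ lam : ℝ, 1 ≤ lam →
      ∀ x : Fin N → EuclideanSpace ℝ (Fin n),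
        (∀ i, ‖x i‖ ≤ lam * Real.sqrt n) →
        (volume (convexHull ℝ
            {y : EuclideanSpace ℝ (Fin n) | ∃ i, y = x i ∨ y = -x i})).toReal
            ^ ((1 : ℝ) / n) ≤
          C * lam * Real.sqrt (Real.log ((N : ℝ) / n) / n) := by
  classical
  refine ⟨Real.exp 21, Real.exp_pos _, ?_⟩
  intro n N hn hN2 hNe lam hlam x hx
  have hn0 : (0:ℝ) < n := by exact_mod_cast hn
  have hN2' : (2:ℝ) * n ≤ N := by exact_mod_cast hN2
  have hN0 : (0:ℝ) < N := by linarith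
  set L := Real.log ((N:ℝ)/n) with hL
  have hNn2 : (2:ℝ) ≤ (N:ℝ)/n := by rw [le_div_iff₀ hn0]; linarith
  have hL2 : Real.log 2 ≤ L := by
    rw [hL]; gcongr
  have hlog2 : (0.6931471803 : ℝ) < Real.log 2 := Real.log_two_gt_d9
  have hL0 : (0:ℝ) < L := by linarith
  have hLn : L ≤ n := by
    rw [hL, Real.log_le_iff_le_exp (by positivity)]
    have hn1 : (1:ℝ) ≤ n := by exact_mod_cast hn
    calc (N:ℝ)/n ≤ N := by
          rw [div_le_iff₀ hn0]; nlinarith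
      _ ≤ Real.exp n := hNe
  set k := ⌈(n:ℝ)/L⌉₊ with hk
  have hnL1 : (1:ℝ) ≤ (n:ℝ)/L := (le_div_iff₀ hL0).2 (by linarith)
  have hkge : (n:ℝ)/L ≤ k := Nat.le_ceil _
  have hk1 : 0 < k := by
    rw [hk]; exact Nat.ceil_pos.2 (by positivity)
  have hk0 : (0:ℝ) < k := by exact_mod_cast hk1
  have hkle : (k:ℝ) ≤ 2*n/L := by
    have h1 := Nat.ceil_lt_add_one (by positivity : (0:ℝ) ≤ (n:ℝ)/L)
    have h2 : (2:ℝ)*n/L = n/L + n/L := by ring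
    rw [← hk] at h1
    linarith
  have hkL : (k:ℝ) * L ≤ 2*n := by
    rw [← le_div_iff₀ hL0]; exact hkle
  have hk3n : (k:ℝ) ≤ 3*n := by
    nlinarith
  set R := lam * Real.sqrt n with hR
  have hsqn : 0 < Real.sqrt n := Real.sqrt_pos.2 hn0
  have hlam0 : (0:ℝ) < lam := by linarith
  have hR0 : 0 < R := by positivity
  have hNpos : 0 < N := by omega
  haveI : Nonempty (Fin N) := ⟨⟨0, hNpos⟩⟩
  set p : Fin N × Bool → EuclideanSpace ℝ (Fin n) :=
    fun c => cond c.2 (x c.1) (-x c.1) with hp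
  have hset : {y : EuclideanSpace ℝ (Fin n) | ∃ i, y = x i ∨ y = -x i} = Set.range p := by
    ext y
    simp only [Set.mem_setOf_eq, Set.mem_range]
    constructor
    · rintro ⟨i, h | h⟩
      · exact ⟨(i, true), h.symm⟩
      · exact ⟨(i, false), h.symm⟩
    · rintro ⟨⟨i, b⟩, rfl⟩
      cases b
      · exact ⟨i, Or.inr rfl⟩
      · exact ⟨i, Or.inl rfl⟩
  rw [hset]
  have hpR : ∀ c, ‖p c‖ ≤ R := by
    rintro ⟨i, b⟩
    cases b
    · simpa [hp] using hx i
    · simpa [hp] using hx i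
  set t := 2 * R / Real.sqrt k with ht
  have hsqk : (0:ℝ) < Real.sqrt k := Real.sqrt_pos.2 hk0
  have ht0 : 0 < t := by positivity
  set F : Sym (Fin N × Bool) k → EuclideanSpace ℝ (Fin n) :=
    fun s => (k:ℝ)⁻¹ • ((Multiset.map p s.1).sum) with hF
  set A : Finset (EuclideanSpace ℝ (Fin n)) := Finset.image F Finset.univ with hA
  have hcover : convexHull ℝ (Set.range p) ⊆ ⋃ a ∈ A, Metric.closedBall a t := by
    intro y hy
    obtain ⟨g, hg⟩ := maurey_approx p hpR hy hk1
    have hcard : Multiset.card (Multiset.map g Finset.univ.val) = k := by simp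
    set s : Sym (Fin N × Bool) k := ⟨Multiset.map g Finset.univ.val, hcard⟩ with hs
    have hFs : F s = (k:ℝ)⁻¹ • ∑ j, p (g j) := by
      rw [hF]
      simp only [hs, Multiset.map_map, Function.comp]
      rw [Finset.sum_eq_multiset_sum]
    refine Set.mem_biUnion (Finset.mem_image_of_mem F (Finset.mem_univ s)) ?_
    rw [Metric.mem_closedBall, dist_eq_norm, hFs]
    exact hg
  have hone : volume (convexHull ℝ (Set.range p)) ≤ (A.card : ℝ≥0∞)
      * volume (Metric.closedBall (0 : EuclideanSpace ℝ (Fin n)) t) := by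
    calc volume (convexHull ℝ (Set.range p))
        ≤ volume (⋃ a ∈ A, Metric.closedBall a t) := measure_mono hcover
      _ ≤ ∑ a ∈ A, volume (Metric.closedBall a t) := measure_biUnion_finset_le A _
      _ = ∑ a ∈ A, volume (Metric.closedBall (0 : EuclideanSpace ℝ (Fin n)) t) :=
          Finset.sum_congr rfl fun a _ => Measure.addHaar_closedBall_center volume a t
      _ = (A.card : ℝ≥0∞) * volume (Metric.closedBall (0 : EuclideanSpace ℝ (Fin n)) t) := by
          rw [Finset.sum_const, nsmul_eq_mul]
  have hfin : (A.card : ℝ≥0∞) * volume (Metric.closedBall (0:EuclideanSpace ℝ (Fin n)) t) ≠ ⊤ :=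
    ENNReal.mul_ne_top (ENNReal.natCast_ne_top _) measure_closedBall_lt_top.ne
  have htoReal : (volume (convexHull ℝ (Set.range p))).toReal
      ≤ (A.card : ℝ) * (volume (Metric.closedBall (0:EuclideanSpace ℝ (Fin n)) t)).toReal := by
    have h := ENNReal.toReal_mono hfin hone
    rwa [ENNReal.toReal_mul, ENNReal.toReal_natCast] at h
  have hball := vol_closedBall_le hn ht0
  set c0 := t * Real.sqrt (2 * Real.pi * Real.exp 1 / n) with hc0
  have hc00 : 0 < c0 := by positivity
  have hmain : (volume (convexHull ℝ (Set.range p))).toReal ≤ (A.card : ℝ) * c0 ^ n :=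
    htoReal.trans (mul_le_mul_of_nonneg_left hball (Nat.cast_nonneg _))
  have hLHS : (volume (convexHull ℝ (Set.range p))).toReal ^ ((1:ℝ)/n)
      ≤ ((A.card : ℝ) * c0 ^ n) ^ ((1:ℝ)/n) :=
    Real.rpow_le_rpow ENNReal.toReal_nonneg hmain (by positivity)
  have hsplit : ((A.card : ℝ) * c0 ^ n) ^ ((1:ℝ)/n)
      = (A.card : ℝ) ^ ((1:ℝ)/n) * c0 := by
    rw [Real.mul_rpow (Nat.cast_nonneg _) (by positivity)]
    congr 1
    rw [← Real.rpow_natCast c0 n, ← Real.rpow_mul hc00.le]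
    rw [mul_one_div, div_self (by positivity : (n:ℝ) ≠ 0), Real.rpow_one]
  -- cardinality bound
  have hcard1 : A.card ≤ Fintype.card (Sym (Fin N × Bool) k) := by
    rw [hA]
    exact (Finset.card_image_le).trans (le_of_eq (Finset.card_univ))
  have hcard2 : Fintype.card (Sym (Fin N × Bool) k)
      = Nat.choose (Fintype.card (Fin N × Bool) + k - 1) k := Sym.card_sym_eq_choose _
  have hcardN : Fintype.card (Fin N × Bool) = 2 * N := by
    simp [Fintype.card_prod, mul_comm]
  have hfact : (0:ℝ) < (Nat.factorial k : ℝ) := by exact_mod_cast k.factorial_pos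
  have hmle : ((2 * N + k - 1 : ℕ) : ℝ) ≤ 4 * N := by
    calc ((2 * N + k - 1 : ℕ) : ℝ) ≤ ((2 * N + k : ℕ) : ℝ) := by
          exact_mod_cast Nat.sub_le _ _
      _ = 2 * (N:ℝ) + k := by push_cast; ring
      _ ≤ 4 * N := by linarith
  have hcardR : (A.card : ℝ) ≤ (4 * Real.exp 1 * N / k) ^ k := by
    have h1 : (A.card : ℝ) ≤ ((2 * N + k - 1).choose k : ℝ) := by
      exact_mod_cast hcard1.trans (le_of_eq (by rw [hcard2, hcardN]))
    have h2 : ((2 * N + k - 1).choose k : ℝ) ≤ ((2 * N + k - 1 : ℕ) : ℝ) ^ k / k.factorial :=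
      Nat.choose_le_pow_div k _
    have h3 : ((2 * N + k - 1 : ℕ) : ℝ) ^ k / k.factorial ≤ (4 * (N:ℝ)) ^ k / k.factorial := by
      exact (div_le_div_iff_of_pos_right hfact).mpr (pow_le_pow_left₀ (Nat.cast_nonneg _) hmle k)
    have hek : ((k:ℝ)) ^ k / k.factorial ≤ Real.exp k :=
      Real.pow_div_factorial_le_exp (x := (k:ℝ)) (Nat.cast_nonneg k) k
    have hkk : ((k:ℝ)) ^ k ≤ Real.exp k * k.factorial := by
      rw [div_le_iff₀ hfact] at hek; exact hek
    have h4 : (4 * (N:ℝ)) ^ k / k.factorial ≤ (4 * Real.exp 1 * N / k) ^ k := by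
      rw [div_pow, div_le_div_iff₀ hfact (by positivity : (0:ℝ) < (k:ℝ)^k)]
      have expand : (4 * Real.exp 1 * (N:ℝ)) ^ k = (4 * (N:ℝ)) ^ k * Real.exp k := by
        rw [mul_pow, mul_pow, ← Real.exp_one_pow]
        ring
      rw [expand]
      calc (4 * (N:ℝ)) ^ k * (k:ℝ) ^ k ≤ (4 * (N:ℝ)) ^ k * (Real.exp k * k.factorial) :=
            mul_le_mul_of_nonneg_left hkk (by positivity)
        _ = (4 * (N:ℝ)) ^ k * Real.exp k * k.factorial := by ring
    calc (A.card : ℝ) ≤ _ := h1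
      _ ≤ _ := h2
      _ ≤ _ := h3
      _ ≤ _ := h4
  have hNk : (N:ℝ)/k ≤ Real.exp L * L := by
    have h1 : (N:ℝ)/k ≤ (N:ℝ)/((n:ℝ)/L) :=
      div_le_div_of_nonneg_left hN0.le (by positivity) hkge
    have h2 : (N:ℝ)/((n:ℝ)/L) = (N:ℝ)/n * L := by field_simp
    have h3 : (N:ℝ)/n = Real.exp L := (Real.exp_log (by positivity)).symm
    rw [h2, h3] at h1
    exact h1
  have hD : 4 * Real.exp 1 * N / k ≤ Real.exp (3 + 2*L) := by
    have hE : Real.exp (3 + 2*L)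
        = Real.exp 1 * Real.exp 1 * Real.exp 1 * Real.exp L * Real.exp L := by
      rw [← Real.exp_add, ← Real.exp_add, ← Real.exp_add, ← Real.exp_add]
      congr 1
      ring
    have he2 : (2:ℝ) ≤ Real.exp 1 := by linarith [Real.add_one_le_exp (1:ℝ)]
    have h4 : (4:ℝ) ≤ Real.exp 1 * Real.exp 1 := by
      calc (4:ℝ) = 2 * 2 := by norm_num
        _ ≤ Real.exp 1 * Real.exp 1 := mul_le_mul he2 he2 (by norm_num) (by linarith)
    have hLeL : L ≤ Real.exp L := by linarith [Real.add_one_le_exp L]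
    have hNk' := hNk
    calc 4 * Real.exp 1 * N / k = 4 * Real.exp 1 * ((N:ℝ)/k) := by ring
      _ ≤ 4 * Real.exp 1 * (Real.exp L * L) :=
          mul_le_mul_of_nonneg_left hNk (by positivity)
      _ ≤ Real.exp (3 + 2*L) := by
          rw [hE]
          have hstep : 4 * L ≤ (Real.exp 1 * Real.exp 1) * Real.exp L :=
            mul_le_mul h4 hLeL hL0.le (by positivity)
          have hstep2 := mul_le_mul_of_nonneg_right hstep
            (by positivity : (0:ℝ) ≤ Real.exp 1 * Real.exp L)
          nlinarith [hstep2]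
  have hcardpow : (A.card : ℝ) ^ ((1:ℝ)/n) ≤ Real.exp 16 := by
    have h1 : (A.card:ℝ) ≤ Real.exp (3+2*L) ^ k :=
      hcardR.trans (pow_le_pow_left₀ (by positivity) hD k)
    have h2 : Real.exp (3+2*L) ^ k = Real.exp ((3+2*L)*k) := by
      rw [← Real.exp_nat_mul]
      ring_nf
    have h3 : (3+2*L)*(k:ℝ) ≤ 16*n := by
      nlinarith
    have h4 : (A.card : ℝ) ^ ((1:ℝ)/n) ≤ (Real.exp ((3+2*L)*k)) ^ ((1:ℝ)/n) := by
      apply Real.rpow_le_rpow (Nat.cast_nonneg _) (h1.trans_eq h2) (by positivity)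
    have h5 : (Real.exp ((3+2*L)*k)) ^ ((1:ℝ)/n) = Real.exp ((3+2*L)*k * (1/n)) := by
      rw [← Real.exp_mul]
    have h6 : (3+2*L)*(k:ℝ) * (1/(n:ℝ)) ≤ 16 := by
      rw [mul_one_div, div_le_iff₀ hn0]
      linarith
    calc (A.card : ℝ) ^ ((1:ℝ)/n) ≤ Real.exp ((3+2*L)*k * (1/n)) := h4.trans_eq h5
      _ ≤ Real.exp 16 := Real.exp_le_exp.mpr h6
  -- bound c0
  have hsqrtk : Real.sqrt ((n:ℝ)/L) ≤ Real.sqrt k := Real.sqrt_le_sqrt hkge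
  have htb : t ≤ 2 * lam * Real.sqrt L := by
    rw [ht, hR]
    have h1 : (0:ℝ) < Real.sqrt ((n:ℝ)/L) := Real.sqrt_pos.2 (by positivity)
    have h2 : 2 * (lam * Real.sqrt n) / Real.sqrt k
        ≤ 2 * (lam * Real.sqrt n) / Real.sqrt ((n:ℝ)/L) :=
      div_le_div_of_nonneg_left (by positivity) h1 hsqrtk
    have h3 : Real.sqrt ((n:ℝ)/L) = Real.sqrt n / Real.sqrt L := Real.sqrt_div hn0.le L
    have hsqL : (0:ℝ) < Real.sqrt L := Real.sqrt_pos.2 hL0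
    have h4 : 2 * (lam * Real.sqrt n) / (Real.sqrt n / Real.sqrt L)
        = 2 * lam * Real.sqrt L := by
      field_simp
    rw [h3, h4] at h2
    exact h2
  have hsq5 : Real.sqrt (2 * Real.pi * Real.exp 1) ≤ 5 := by
    have hpi : Real.pi < 3.15 := by
      have := Real.pi_lt_d2
      linarith
    have he : Real.exp 1 < 2.7182818286 := Real.exp_one_lt_d9
    have h25 : 2 * Real.pi * Real.exp 1 ≤ 25 := by
      nlinarith [Real.pi_pos, Real.exp_pos (1:ℝ)]
    calc Real.sqrt (2 * Real.pi * Real.exp 1) ≤ Real.sqrt 25 := Real.sqrt_le_sqrt h25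
      _ = 5 := by
        rw [show (25:ℝ) = 5^2 by norm_num, Real.sqrt_sq (by norm_num)]
  have hc0b : c0 ≤ 2 * lam * Real.sqrt L * (5 / Real.sqrt n) := by
    rw [hc0]
    have h1 : Real.sqrt (2 * Real.pi * Real.exp 1 / n)
        = Real.sqrt (2 * Real.pi * Real.exp 1) / Real.sqrt n :=
      Real.sqrt_div (by positivity) n
    rw [h1]
    have h2 : Real.sqrt (2 * Real.pi * Real.exp 1) / Real.sqrt n ≤ 5 / Real.sqrt n :=
      (div_le_div_iff_of_pos_right hsqn).mpr hsq5
    exact mul_le_mul htb h2 (by positivity) (by positivity)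
  have hfinal : (A.card : ℝ) ^ ((1:ℝ)/n) * c0
      ≤ Real.exp 16 * (2 * lam * Real.sqrt L * (5 / Real.sqrt n)) :=
    mul_le_mul hcardpow hc0b hc00.le (Real.exp_pos _).le
  have h10 : (10:ℝ) * Real.exp 16 ≤ Real.exp 21 := by
    have h1 : Real.exp 21 = Real.exp 5 * Real.exp 16 := by
      rw [← Real.exp_add]; norm_num
    have h3 : Real.exp 1 ^ (5:ℕ) = Real.exp 5 := by
      rw [Real.exp_one_pow]; norm_num
    have h2 : (32:ℝ) ≤ Real.exp 5 := by
      rw [← h3]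
      have he2 : (2:ℝ) ≤ Real.exp 1 := by linarith [Real.add_one_le_exp (1:ℝ)]
      calc (32:ℝ) = 2 ^ 5 := by norm_num
        _ ≤ Real.exp 1 ^ 5 := pow_le_pow_left₀ (by norm_num) he2 5
    nlinarith [Real.exp_pos (16:ℝ)]
  have hsqrtLn : Real.sqrt (L/(n:ℝ)) = Real.sqrt L / Real.sqrt n := Real.sqrt_div hL0.le n
  calc (volume (convexHull ℝ (Set.range p))).toReal ^ ((1:ℝ)/(n:ℝ))
      ≤ ((A.card : ℝ) * c0 ^ n) ^ ((1:ℝ)/n) := hLHS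
    _ = (A.card : ℝ) ^ ((1:ℝ)/n) * c0 := hsplit
    _ ≤ Real.exp 16 * (2 * lam * Real.sqrt L * (5 / Real.sqrt n)) := hfinal
    _ = (10 * Real.exp 16) * (lam * (Real.sqrt L / Real.sqrt n)) := by ring
    _ ≤ Real.exp 21 * (lam * (Real.sqrt L / Real.sqrt n)) :=
        mul_le_mul_of_nonneg_right h10 (by positivity)
    _ = Real.exp 21 * lam * Real.sqrt (L / n) := by rw [hsqrtLn]; ring
end
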